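/- arXiv:2511.18220 — 2 statements merged into one kernel-verified Lean document; each statement's English description precedes it below -/
import Mathlib

section
/- For the Donsker-Varadhan variational representation on a finite set: KL(p || q) = sup over functions g : X → ℝ of (E_{X∼p}[g(X)] - log E_{X∼q}[exp(g(X))]), where the supremum is attained by g = log(p/q) when p is absolutely continuous with respect to q. -/
open scoped BigOperators Classical
open Finset

noncomputable section

/-- Probability of an event under a pmf on a finite sample space. -/
def pr {Ω : Type*} [Fintype Ω] (μ : Ω → ℝ) (E : Ω → Prop) : ℝ :=
  ∑ ω, if E ω then μ ω else 0

/-- `μ` is a probability mass function on the finite sample space. -/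
def IsPMF {Ω : Type*} [Fintype Ω] (μ : Ω → ℝ) : Prop :=
  (∀ ω, 0 ≤ μ ω) ∧ ∑ ω, μ ω = 1

/-- Kullback-Leibler divergence between pmfs on a finite set. -/
def klFin {A : Type*} [Fintype A] (p q : A → ℝ) : ℝ :=
  ∑ a, p a * Real.log (p a / q a)

/-- Mutual information between discrete random variables `X` and `Y`. -/
def miFin {Ω A B : Type*} [Fintype Ω] [Fintype A] [Fintype B]
    (μ : Ω → ℝ) (X : Ω → A) (Y : Ω → B) : ℝ :=
  ∑ a, ∑ b, pr μ (fun ω => X ω = a ∧ Y ω = b) *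
    Real.log (pr μ (fun ω => X ω = a ∧ Y ω = b) /
      (pr μ (fun ω => X ω = a) * pr μ (fun ω => Y ω = b)))

/-- Conditional mutual information `I(X; Y | Z)`. -/
def cmiFin {Ω A B C : Type*} [Fintype Ω] [Fintype A] [Fintype B] [Fintype C]
    (μ : Ω → ℝ) (X : Ω → A) (Y : Ω → B) (Z : Ω → C) : ℝ :=
  ∑ c, ∑ a, ∑ b,
    pr μ (fun ω => X ω = a ∧ Y ω = b ∧ Z ω = c) *
      Real.log ((pr μ (fun ω => X ω = a ∧ Y ω = b ∧ Z ω = c) * pr μ (fun ω => Z ω = c)) /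
        (pr μ (fun ω => X ω = a ∧ Z ω = c) * pr μ (fun ω => Y ω = b ∧ Z ω = c)))

/-- Shannon entropy of a discrete random variable. -/
def entFin {Ω A : Type*} [Fintype Ω] [Fintype A] (μ : Ω → ℝ) (X : Ω → A) : ℝ :=
  -∑ a, pr μ (fun ω => X ω = a) * Real.log (pr μ (fun ω => X ω = a))

/-- Conditional entropy `H(X | Y) = H(X, Y) - H(Y)`. -/
def condEntFin {Ω A B : Type*} [Fintype Ω] [Fintype A] [Fintype B]
    (μ : Ω → ℝ) (X : Ω → A) (Y : Ω → B) : ℝ :=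
  entFin μ (fun ω => (X ω, Y ω)) - entFin μ Y

/-- `X` and `Z` are conditionally independent given `Y` under `μ`. -/
def CondIndep {Ω A B C : Type*} [Fintype Ω] [Fintype A] [Fintype B] [Fintype C]
    (μ : Ω → ℝ) (X : Ω → A) (Z : Ω → B) (Y : Ω → C) : Prop :=
  ∀ a b c,
    pr μ (fun ω => X ω = a ∧ Z ω = b ∧ Y ω = c) * pr μ (fun ω => Y ω = c) =
      pr μ (fun ω => X ω = a ∧ Y ω = c) * pr μ (fun ω => Z ω = b ∧ Y ω = c)

/-- `W` is a channel (conditional distribution) from `A` to `B`. -/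
def IsChannel {A B : Type*} [Fintype A] [Fintype B] (W : A → B → ℝ) : Prop :=
  ∀ a, (∀ b, 0 ≤ W a b) ∧ ∑ b, W a b = 1

/-- Output marginal of channel `W` given source `p`. -/
def chanMarg {A B : Type*} [Fintype A] [Fintype B] (p : A → ℝ) (W : A → B → ℝ) (b : B) : ℝ :=
  ∑ a, p a * W a b

/-- Mutual information between input and output of channel `W` under source `p`. -/
def miChan {A B : Type*} [Fintype A] [Fintype B] (p : A → ℝ) (W : A → B → ℝ) : ℝ :=
  ∑ a, ∑ b, p a * W a b * Real.log (W a b / chanMarg p W b)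

/-- Expected distortion of channel `W` under source `p` and distortion `d`. -/
def expDist {A B : Type*} [Fintype A] [Fintype B]
    (p : A → ℝ) (W : A → B → ℝ) (d : A → B → ℝ) : ℝ :=
  ∑ a, ∑ b, p a * W a b * d a b

private lemma dv_term {p q g Z : ℝ} (hp : 0 ≤ p) (hq : 0 < q) (hZ : 0 < Z) :
    p * g - p * Real.log Z ≤ p * Real.log (p / q) + (q * Real.exp g / Z - p) := by
  rcases eq_or_lt_of_le hp with h | hp'
  · rw [← h]
    have : 0 ≤ q * Real.exp g / Z := by positivity
    simp [this]
  · have hx : (0:ℝ) < q * Real.exp g / (Z * p) := by positivity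
    have h1 := Real.log_le_sub_one_of_pos hx
    rw [Real.log_div (by positivity) (by positivity),
      Real.log_mul (ne_of_gt hq) (Real.exp_ne_zero _), Real.log_exp,
      Real.log_mul (ne_of_gt hZ) (ne_of_gt hp')] at h1
    have h2 := mul_le_mul_of_nonneg_left h1 hp
    have hfield : p * (q * Real.exp g / (Z * p) - 1) = q * Real.exp g / Z - p := by
      field_simp
    rw [Real.log_div (ne_of_gt hp') (ne_of_gt hq)]
    nlinarith [h2]

private lemma dv_bound {A : Type*} [Fintype A]
    (p : A → ℝ) (hp0 : ∀ a, 0 ≤ p a) (hp1 : ∑ a, p a = 1)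
    (q : A → ℝ) (hq : ∀ a, 0 < q a) (g : A → ℝ) :
    (∑ a, p a * g a) - Real.log (∑ a, q a * Real.exp (g a)) ≤ klFin p q := by
  have hne : (Finset.univ : Finset A).Nonempty := by
    by_contra h
    rw [Finset.not_nonempty_iff_eq_empty] at h
    rw [h] at hp1; simp at hp1
  set Z := ∑ a, q a * Real.exp (g a) with hZdef
  have hZ : 0 < Z := Finset.sum_pos (fun a _ => mul_pos (hq a) (Real.exp_pos _)) hne
  have hsum := Finset.sum_le_sum
    (fun a (_ : a ∈ Finset.univ) => dv_term (hp0 a) (hq a) hZ (g := g a))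
  have hL : ∑ a, (p a * g a - p a * Real.log Z) =
      (∑ a, p a * g a) - Real.log Z := by
    rw [Finset.sum_sub_distrib, ← Finset.sum_mul, hp1, one_mul]
  have hR : ∑ a, (p a * Real.log (p a / q a) + (q a * Real.exp (g a) / Z - p a)) =
      klFin p q := by
    rw [Finset.sum_add_distrib, Finset.sum_sub_distrib, ← Finset.sum_div, hp1, klFin]
    rw [div_self (ne_of_gt hZ)]
    ring
  rw [hL, hR] at hsum
  exact hsum

/-- Donsker-Varadhan variational representation of the KL divergence on a finite set:
`KL(p‖q) = sup_g (E_p[g] - log E_q[exp g])`, attained by `g = log(p/q)` when `p ≪ q`. -/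
theorem donsker_varadhan {A : Type*} [Fintype A]
    (p : A → ℝ) (hp0 : ∀ a, 0 ≤ p a) (hp1 : ∑ a, p a = 1)
    (q : A → ℝ) (hq : ∀ a, 0 < q a) (hq1 : ∑ a, q a = 1) :
    sSup {r : ℝ | ∃ g : A → ℝ,
        r = (∑ a, p a * g a) - Real.log (∑ a, q a * Real.exp (g a))} = klFin p q ∧
      ((∀ a, 0 < p a) →
        IsGreatest {r : ℝ | ∃ g : A → ℝ,
            r = (∑ a, p a * g a) - Real.log (∑ a, q a * Real.exp (g a))} (klFin p q) ∧
          (∑ a, p a * Real.log (p a / q a)) -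
              Real.log (∑ a, q a * Real.exp (Real.log (p a / q a))) = klFin p q) := by
  set S := {r : ℝ | ∃ g : A → ℝ,
      r = (∑ a, p a * g a) - Real.log (∑ a, q a * Real.exp (g a))} with hS
  have hSne : S.Nonempty := ⟨_, fun _ => (0:ℝ), rfl⟩
  have hub : ∀ r ∈ S, r ≤ klFin p q := by
    rintro r ⟨g, rfl⟩
    exact dv_bound p hp0 hp1 q hq g
  have hbdd : BddAbove S := ⟨klFin p q, hub⟩
  constructor
  · apply le_antisymm (csSup_le hSne hub)
    apply le_of_forall_pos_le_add
    intro ε hε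
    set t : ℝ := Real.exp ε - 1 with ht
    have ht0 : 0 < t := by
      have h := Real.add_one_le_exp ε
      simp only [ht]; linarith
    set g : A → ℝ := fun a => if p a = 0 then Real.log t else Real.log (p a / q a)
      with hg
    set c : ℝ := ∑ a, (if p a = 0 then q a else 0) with hc
    have hc0 : 0 ≤ c := Finset.sum_nonneg fun a _ => by
      split <;> simp [(hq a).le]
    have hc1 : c ≤ 1 := by
      rw [← hq1]
      exact Finset.sum_le_sum fun a _ => by split <;> simp [(hq a).le]
    have hnum : ∑ a, p a * g a = klFin p q := by
      apply Finset.sum_congr rfl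
      intro a _
      by_cases h : p a = 0 <;> simp [hg, h]
    have hden : ∑ a, q a * Real.exp (g a) = 1 + t * c := by
      have : ∀ a, q a * Real.exp (g a) = p a + (if p a = 0 then q a * t else 0) := by
        intro a
        by_cases h : p a = 0
        · simp [hg, h, Real.exp_log ht0]
        · have hp' : 0 < p a := lt_of_le_of_ne (hp0 a) (Ne.symm h)
          simp only [hg, h, if_false, Real.exp_log (div_pos hp' (hq a))]
          rw [mul_div_cancel₀ _ (ne_of_gt (hq a))]
          simp [h]
      rw [Finset.sum_congr rfl fun a _ => this a, Finset.sum_add_distrib, hp1, hc]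
      rw [Finset.mul_sum]
      congr 1
      apply Finset.sum_congr rfl
      intro a _
      split <;> ring
    have hmem : klFin p q - Real.log (1 + t * c) ∈ S := by
      exact ⟨g, by rw [hnum, hden]⟩
    have hle : Real.log (1 + t * c) ≤ ε := by
      have h1 : 1 + t * c ≤ Real.exp ε := by nlinarith
      calc Real.log (1 + t * c) ≤ Real.log (Real.exp ε) :=
            Real.log_le_log (by nlinarith) h1
        _ = ε := Real.log_exp ε
    have := le_csSup hbdd hmem
    linarith
  · intro hp
    have hden1 : ∑ a, q a * Real.exp (Real.log (p a / q a)) = 1 := by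
      rw [← hp1]
      apply Finset.sum_congr rfl
      intro a _
      rw [Real.exp_log (div_pos (hp a) (hq a)), mul_div_cancel₀ _ (ne_of_gt (hq a))]
    have hattain : (∑ a, p a * Real.log (p a / q a)) -
        Real.log (∑ a, q a * Real.exp (Real.log (p a / q a))) = klFin p q := by
      rw [hden1, Real.log_one, sub_zero, klFin]
    exact ⟨⟨⟨fun a => Real.log (p a / q a), hattain.symm⟩, hub⟩, hattain⟩
end
end

section
/- Strong duality for rate-distortion: R(D) = sup_{β ≥ 0} [ (inf over channels p(X̂|X) of I(X; X̂) + β·E[d(X, X̂)]) - β·D ], for all D in the interior of the domain where R is finite. -/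
open scoped BigOperators Classical
open Finset

noncomputable section

open Filter Topology

section RDAux

/-- `x - y ≤ x log(x/y)` for nonneg reals, with convention `y = 0 → x = 0`. -/
lemma gibbs_term {x y : ℝ} (hx : 0 ≤ x) (hy : 0 ≤ y) (h : y = 0 → x = 0) :
    x - y ≤ x * Real.log (x / y) := by
  rcases eq_or_lt_of_le hx with hx0 | hx0
  · simp [← hx0]; linarith
  have hy0 : 0 < y := by
    rcases eq_or_lt_of_le hy with hy0 | hy0
    · exact absurd (h hy0.symm) (by linarith)
    · exact hy0
  have hlog : Real.log (y / x) ≤ y / x - 1 :=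
    Real.log_le_sub_one_of_pos (by positivity)
  have : 1 - y / x ≤ Real.log (x / y) := by
    have : Real.log (x / y) = -Real.log (y / x) := by
      rw [← Real.log_inv, inv_div]
    rw [this]; linarith
  have := mul_le_mul_of_nonneg_left this hx
  calc x - y = x * (1 - y/x) := by field_simp
    _ ≤ x * Real.log (x/y) := this

/-- two-term log-sum inequality with zero conventions. -/
lemma log_sum_two {x1 x2 y1 y2 : ℝ} (hx1 : 0 ≤ x1) (hx2 : 0 ≤ x2) (hy1 : 0 ≤ y1)
    (hy2 : 0 ≤ y2) (h1 : y1 = 0 → x1 = 0) (h2 : y2 = 0 → x2 = 0) :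
    (x1 + x2) * Real.log ((x1 + x2) / (y1 + y2)) ≤
      x1 * Real.log (x1 / y1) + x2 * Real.log (x2 / y2) := by
  rcases eq_or_lt_of_le (add_nonneg hy1 hy2) with hY | hY
  · have e1 : y1 = 0 := by linarith
    have e2 : y2 = 0 := by linarith
    simp [h1 e1, h2 e2, e1, e2]
  rcases eq_or_lt_of_le (add_nonneg hx1 hx2) with hX | hX
  · have e1 : x1 = 0 := by linarith
    have e2 : x2 = 0 := by linarith
    simp [e1, e2]
  set X := x1 + x2 with hXdef
  set Y := y1 + y2 with hYdef
  have key : ∀ x y : ℝ, 0 ≤ x → 0 ≤ y → (y = 0 → x = 0) →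
      x * Real.log (X / Y) + x - y * (X / Y) ≤ x * Real.log (x / y) := by
    intro x y hx hy h
    rcases eq_or_lt_of_le hx with hx0 | hx0
    · have h0 : 0 ≤ y * (X / Y) := by positivity
      rw [← hx0]
      nlinarith [h0]
    have hy0 : 0 < y := by
      rcases eq_or_lt_of_le hy with hy0 | hy0
      · exact absurd (h hy0.symm) (by linarith)
      · exact hy0
    have hXY : 0 < X / Y := by positivity
    have hypos : (0:ℝ) < y * (X/Y) := by positivity
    have := gibbs_term hx hypos.le (fun hc => absurd hc hypos.ne')
    have hlogeq : Real.log (x / (y * (X/Y))) = Real.log (x/y) - Real.log (X/Y) := by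
      rw [div_mul_eq_div_div, Real.log_div (by positivity) (by positivity)]
    rw [hlogeq] at this
    nlinarith [this]
  have k1 := key x1 y1 hx1 hy1 h1
  have k2 := key x2 y2 hx2 hy2 h2
  have hYX : y1 * (X / Y) + y2 * (X / Y) = X := by
    rw [← add_mul, ← hYdef, mul_comm, div_mul_cancel₀ X hY.ne']
  nlinarith [k1, k2]

/-- cancel a common nonnegative factor inside `x log(x/y)`. -/
lemma ratio_cancel (c w q : ℝ) (hc : 0 ≤ c) :
    (c * w) * Real.log ((c * w) / (c * q)) = c * (w * Real.log (w / q)) := by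
  rcases eq_or_lt_of_le hc with hc0 | hc0
  · simp [← hc0]
  · rw [mul_div_mul_left w q hc0.ne']
    ring

variable {A B : Type*} [Fintype A] [Fintype B]

lemma chanMarg_nonneg {p : A → ℝ} (hp0 : ∀ a, 0 ≤ p a) {W : A → B → ℝ}
    (hW : IsChannel W) (b : B) : 0 ≤ chanMarg p W b :=
  Finset.sum_nonneg fun a _ => mul_nonneg (hp0 a) ((hW a).1 b)

lemma marg_zero {p : A → ℝ} (hp0 : ∀ a, 0 ≤ p a) {W : A → B → ℝ}
    (hW : IsChannel W) {b : B} (h : chanMarg p W b = 0) (a : A) : p a * W a b = 0 := by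
  have := (Finset.sum_eq_zero_iff_of_nonneg
    (fun a _ => mul_nonneg (hp0 a) ((hW a).1 b))).1 h a (Finset.mem_univ a)
  exact this

lemma sum_chanMarg {p : A → ℝ} (hp1 : ∑ a, p a = 1) {W : A → B → ℝ}
    (hW : IsChannel W) : ∑ b, chanMarg p W b = 1 := by
  rw [show (∑ b, chanMarg p W b) = ∑ a, p a * ∑ b, W a b by
    simp only [chanMarg, Finset.mul_sum]
    exact Finset.sum_comm]
  simp only [fun a => (hW a).2, mul_one, hp1]

lemma miChan_term_eq {p : A → ℝ} (hp0 : ∀ a, 0 ≤ p a) (W : A → B → ℝ) (a : A) (b : B) :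
    p a * W a b * Real.log (W a b / chanMarg p W b) =
      (p a * W a b) * Real.log ((p a * W a b) / (p a * chanMarg p W b)) := by
  rw [ratio_cancel (p a) (W a b) (chanMarg p W b) (hp0 a)]
  ring

lemma miChan_nonneg {p : A → ℝ} (hp0 : ∀ a, 0 ≤ p a) (hp1 : ∑ a, p a = 1)
    {W : A → B → ℝ} (hW : IsChannel W) : 0 ≤ miChan p W := by
  have key : ∀ a ∈ Finset.univ (α := A), ∀ b ∈ Finset.univ (α := B),
      (p a * W a b) - (p a * chanMarg p W b) ≤
        p a * W a b * Real.log (W a b / chanMarg p W b) := by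
    intro a _ b _
    rw [miChan_term_eq hp0 W a b]
    refine gibbs_term (mul_nonneg (hp0 a) ((hW a).1 b))
      (mul_nonneg (hp0 a) (chanMarg_nonneg hp0 hW b)) ?_
    intro h
    rcases mul_eq_zero.1 h with h | h
    · rw [h, zero_mul]
    · rw [mul_comm (p a) (W a b)]
      have := marg_zero hp0 hW h a
      linarith [this]
  have hsum : ∑ a, ∑ b, ((p a * W a b) - (p a * chanMarg p W b)) = 0 := by
    have e1 : ∑ a, ∑ b, p a * W a b = 1 := by
      simp only [← Finset.mul_sum]
      simp only [fun a => (hW a).2, mul_one, hp1]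
    have e2 : ∑ a, ∑ b, p a * chanMarg p W b = 1 := by
      simp only [← Finset.mul_sum, sum_chanMarg hp1 hW, mul_one, hp1]
    simp only [Finset.sum_sub_distrib, e1, e2, sub_self]
  calc (0:ℝ) = ∑ a, ∑ b, ((p a * W a b) - (p a * chanMarg p W b)) := hsum.symm
    _ ≤ miChan p W := Finset.sum_le_sum fun a ha => Finset.sum_le_sum (key a ha)

lemma chanMarg_combo (p : A → ℝ) (W1 W2 : A → B → ℝ) (θ : ℝ) (b : B) :
    chanMarg p (fun a b => θ * W1 a b + (1-θ) * W2 a b) b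
      = θ * chanMarg p W1 b + (1-θ) * chanMarg p W2 b := by
  simp only [chanMarg, Finset.mul_sum, mul_add, Finset.sum_add_distrib]
  congr 1 <;> (apply Finset.sum_congr rfl; intro a _; ring)

lemma isChannel_combo {W1 W2 : A → B → ℝ} (hW1 : IsChannel W1) (hW2 : IsChannel W2)
    {θ : ℝ} (h0 : 0 ≤ θ) (h1 : θ ≤ 1) :
    IsChannel (fun a b => θ * W1 a b + (1-θ) * W2 a b) := by
  intro a
  constructor
  · intro b
    have h1' : 0 ≤ (1-θ) := by linarith
    exact add_nonneg (mul_nonneg h0 ((hW1 a).1 b)) (mul_nonneg h1' ((hW2 a).1 b))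
  · simp only [Finset.sum_add_distrib, ← Finset.mul_sum, (hW1 a).2, (hW2 a).2]
    ring

lemma expDist_combo (p : A → ℝ) (W1 W2 : A → B → ℝ) (d : A → B → ℝ) (θ : ℝ) :
    expDist p (fun a b => θ * W1 a b + (1-θ) * W2 a b) d
      = θ * expDist p W1 d + (1-θ) * expDist p W2 d := by
  simp only [expDist, Finset.mul_sum]
  rw [← Finset.sum_add_distrib]
  refine Finset.sum_congr rfl fun a _ => ?_
  rw [← Finset.sum_add_distrib]
  refine Finset.sum_congr rfl fun b _ => ?_
  ring

lemma miChan_convex {p : A → ℝ} (hp0 : ∀ a, 0 ≤ p a)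
    {W1 W2 : A → B → ℝ} (hW1 : IsChannel W1) (hW2 : IsChannel W2)
    {θ : ℝ} (h0 : 0 ≤ θ) (h1 : θ ≤ 1) :
    miChan p (fun a b => θ * W1 a b + (1-θ) * W2 a b)
      ≤ θ * miChan p W1 + (1-θ) * miChan p W2 := by
  have h1' : 0 ≤ 1 - θ := by linarith
  set Wc : A → B → ℝ := fun a b => θ * W1 a b + (1-θ) * W2 a b with hWc
  have key : ∀ a b, p a * Wc a b * Real.log (Wc a b / chanMarg p Wc b)
      ≤ θ * (p a * W1 a b * Real.log (W1 a b / chanMarg p W1 b))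
        + (1-θ) * (p a * W2 a b * Real.log (W2 a b / chanMarg p W2 b)) := by
    intro a b
    have e1 : p a * Wc a b = θ * (p a * W1 a b) + (1-θ) * (p a * W2 a b) := by
      simp only [hWc]; ring
    have e2 : p a * chanMarg p Wc b
        = θ * (p a * chanMarg p W1 b) + (1-θ) * (p a * chanMarg p W2 b) := by
      rw [hWc, chanMarg_combo]; ring
    have r1 : θ * (p a * W1 a b * Real.log (W1 a b / chanMarg p W1 b))
        = (θ * (p a * W1 a b)) *
          Real.log ((θ * (p a * W1 a b)) / (θ * (p a * chanMarg p W1 b))) := by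
      rw [ratio_cancel θ (p a * W1 a b) (p a * chanMarg p W1 b) h0,
        miChan_term_eq hp0 W1 a b]
    have r2 : (1-θ) * (p a * W2 a b * Real.log (W2 a b / chanMarg p W2 b))
        = ((1-θ) * (p a * W2 a b)) *
          Real.log (((1-θ) * (p a * W2 a b)) / ((1-θ) * (p a * chanMarg p W2 b))) := by
      rw [ratio_cancel (1-θ) (p a * W2 a b) (p a * chanMarg p W2 b) h1',
        miChan_term_eq hp0 W2 a b]
    rw [miChan_term_eq hp0 Wc a b, e1, e2, r1, r2]
    refine log_sum_two (mul_nonneg h0 (mul_nonneg (hp0 a) ((hW1 a).1 b))) ?_ ?_ ?_ ?_ ?_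
    · exact mul_nonneg h1' (mul_nonneg (hp0 a) ((hW2 a).1 b))
    · exact mul_nonneg h0 (mul_nonneg (hp0 a) (chanMarg_nonneg hp0 hW1 b))
    · exact mul_nonneg h1' (mul_nonneg (hp0 a) (chanMarg_nonneg hp0 hW2 b))
    · intro h
      rcases mul_eq_zero.1 h with h | h
      · rw [h, zero_mul]
      · rcases mul_eq_zero.1 h with h | h
        · rw [h, zero_mul, mul_zero]
        · rw [marg_zero hp0 hW1 h a, mul_zero]
    · intro h
      rcases mul_eq_zero.1 h with h | h
      · rw [h, zero_mul]
      · rcases mul_eq_zero.1 h with h | h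
        · rw [h, zero_mul, mul_zero]
        · rw [marg_zero hp0 hW2 h a, mul_zero]
  calc miChan p Wc ≤ ∑ a, ∑ b,
      (θ * (p a * W1 a b * Real.log (W1 a b / chanMarg p W1 b))
        + (1-θ) * (p a * W2 a b * Real.log (W2 a b / chanMarg p W2 b))) :=
        Finset.sum_le_sum fun a _ => Finset.sum_le_sum fun b _ => key a b
    _ = θ * miChan p W1 + (1-θ) * miChan p W2 := by
        simp only [miChan, Finset.sum_add_distrib, Finset.mul_sum]

lemma expDist_nonneg {p : A → ℝ} (hp0 : ∀ a, 0 ≤ p a) {W : A → B → ℝ}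
    (hW : IsChannel W) {d : A → B → ℝ} (hd : ∀ a b, 0 ≤ d a b) :
    0 ≤ expDist p W d :=
  Finset.sum_nonneg fun a _ => Finset.sum_nonneg fun b _ =>
    mul_nonneg (mul_nonneg (hp0 a) ((hW a).1 b)) (hd a b)


end RDAux

/-- Strong duality for the rate-distortion problem: for `D` in the interior of the
feasible domain, `R(D) = sup_{β ≥ 0} [(inf_W I(X;X̂) + β E[d]) - β D]`. -/

theorem rd_strong_duality {A B : Type*} [Fintype A] [Fintype B]
    (p : A → ℝ) (hp0 : ∀ a, 0 ≤ p a) (hp1 : ∑ a, p a = 1)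
    (d : A → B → ℝ) (hd : ∀ a b, 0 ≤ d a b) (D : ℝ)
    (hD : ∃ W : A → B → ℝ, IsChannel W ∧ expDist p W d < D) :
    sInf {r : ℝ | ∃ W : A → B → ℝ, IsChannel W ∧ expDist p W d ≤ D ∧ r = miChan p W} =
      sSup {r : ℝ | ∃ β : ℝ, 0 ≤ β ∧
        r = sInf {s : ℝ | ∃ W : A → B → ℝ, IsChannel W ∧
              s = miChan p W + β * expDist p W d} -
          β * D} := by
  classical
  obtain ⟨W₀, hW₀, hW₀D⟩ := hD
  set P : Set ℝ := {r : ℝ | ∃ W : A → B → ℝ,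
    IsChannel W ∧ expDist p W d ≤ D ∧ r = miChan p W} with hPdef
  set Q : Set ℝ := {r : ℝ | ∃ β : ℝ, 0 ≤ β ∧
    r = sInf {s : ℝ | ∃ W : A → B → ℝ, IsChannel W ∧
          s = miChan p W + β * expDist p W d} - β * D} with hQdef
  have hPne : P.Nonempty := ⟨miChan p W₀, W₀, hW₀, hW₀D.le, rfl⟩
  have hPbdd : BddBelow P := by
    refine ⟨0, ?_⟩
    rintro r ⟨W, hW, -, rfl⟩
    exact miChan_nonneg hp0 hp1 hW
  have weak : ∀ r ∈ Q, r ≤ sInf P := by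
    rintro r ⟨β, hβ, rfl⟩
    refine le_csInf hPne ?_
    rintro x ⟨W, hW, hWD, rfl⟩
    have hSbdd : BddBelow {s : ℝ | ∃ W : A → B → ℝ, IsChannel W ∧
        s = miChan p W + β * expDist p W d} := by
      refine ⟨0, ?_⟩
      rintro s ⟨W', hW', rfl⟩
      exact add_nonneg (miChan_nonneg hp0 hp1 hW')
        (mul_nonneg hβ (expDist_nonneg hp0 hW' hd))
    have h1 : sInf {s : ℝ | ∃ W : A → B → ℝ, IsChannel W ∧
        s = miChan p W + β * expDist p W d} ≤ miChan p W + β * expDist p W d :=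
      csInf_le hSbdd ⟨W, hW, rfl⟩
    have h2 : β * expDist p W d ≤ β * D := mul_le_mul_of_nonneg_left hWD hβ
    linarith
  have hQne : Q.Nonempty :=
    ⟨sInf {s : ℝ | ∃ W : A → B → ℝ, IsChannel W ∧
        s = miChan p W + 0 * expDist p W d} - 0 * D, 0, le_refl 0, rfl⟩
  have hQbdd : BddAbove Q := ⟨sInf P, weak⟩
  refine le_antisymm ?_ (csSup_le hQne weak)
  refine le_of_forall_pos_le_add ?_
  intro ε hε
  -- the convex achievable region
  set C : Set (ℝ × ℝ) := {x : ℝ × ℝ | ∃ W : A → B → ℝ,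
    IsChannel W ∧ expDist p W d ≤ x.1 ∧ miChan p W ≤ x.2} with hCdef
  have hCconv : Convex ℝ C := by
    rintro x ⟨W1, hW1, hE1, hI1⟩ y ⟨W2, hW2, hE2, hI2⟩ θ1 θ2 hθ1 hθ2 hθ12
    have hθ2' : θ2 = 1 - θ1 := by linarith
    subst hθ2'
    refine ⟨fun a b => θ1 * W1 a b + (1-θ1) * W2 a b,
      isChannel_combo hW1 hW2 hθ1 (by linarith), ?_, ?_⟩
    · rw [expDist_combo]
      have : (θ1 • x + (1-θ1) • y).1 = θ1 * x.1 + (1-θ1) * y.1 := rfl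
      rw [this]
      have := mul_le_mul_of_nonneg_left hE1 hθ1
      have := mul_le_mul_of_nonneg_left hE2 (by linarith : (0:ℝ) ≤ 1 - θ1)
      linarith
    · have h := miChan_convex hp0 hW1 hW2 hθ1 (by linarith)
      have : (θ1 • x + (1-θ1) • y).2 = θ1 * x.2 + (1-θ1) * y.2 := rfl
      rw [this]
      have := mul_le_mul_of_nonneg_left hI1 hθ1
      have := mul_le_mul_of_nonneg_left hI2 (by linarith : (0:ℝ) ≤ 1 - θ1)
      linarith
  set z : ℝ × ℝ := (D, miChan p W₀ + 1) with hzdef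
  have hzint : z ∈ interior C := by
    rw [mem_interior]
    refine ⟨Set.Ioi (expDist p W₀ d) ×ˢ Set.Ioi (miChan p W₀), ?_, ?_, ?_⟩
    · rintro ⟨u, t⟩ ⟨hu, ht⟩
      exact ⟨W₀, hW₀, (Set.mem_Ioi.1 hu).le, (Set.mem_Ioi.1 ht).le⟩
    · exact isOpen_Ioi.prod isOpen_Ioi
    · exact ⟨show expDist p W₀ d < D from hW₀D,
        show miChan p W₀ < miChan p W₀ + 1 by linarith⟩
  set xpt : ℝ × ℝ := (D, sInf P - ε) with hxdef
  have hxnot : xpt ∉ interior C := by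
    intro h
    obtain ⟨W, hW, hE, hI⟩ := interior_subset h
    have : sInf P ≤ miChan p W := csInf_le hPbdd ⟨W, hW, hE, rfl⟩
    have hI' : miChan p W ≤ sInf P - ε := hI
    linarith
  obtain ⟨φ, hφ⟩ := geometric_hahn_banach_open_point hCconv.interior isOpen_interior hxnot
  set α : ℝ := φ (1, 0) with hαdef
  set γ : ℝ := φ (0, 1) with hγdef
  have hrepr : ∀ u t : ℝ, φ (u, t) = u * α + t * γ := by
    intro u t
    have h : (u, t) = u • ((1:ℝ), (0:ℝ)) + t • ((0:ℝ), (1:ℝ)) := by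
      simp [Prod.ext_iff]
    rw [h, map_add, map_smul, map_smul, smul_eq_mul, smul_eq_mul]
  have hφC : ∀ y ∈ C, φ y ≤ φ xpt := by
    intro c hc
    have hcomb : ∀ θ : ℝ, θ ∈ Set.Ioc (0:ℝ) 1 →
        θ * φ z + (1-θ) * φ c < φ xpt := by
      intro θ hθ
      have hm := hCconv.combo_interior_self_mem_interior hzint hc hθ.1
        (by linarith [hθ.2] : (0:ℝ) ≤ 1 - θ) (by ring)
      have := hφ _ hm
      rwa [map_add, map_smul, map_smul, smul_eq_mul, smul_eq_mul] at this
    have tend : Tendsto (fun θ : ℝ => θ * φ z + (1-θ) * φ c) (𝓝[>] 0) (𝓝 (φ c)) := by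
      have hcont : Continuous fun θ : ℝ => θ * φ z + (1-θ) * φ c :=
        (continuous_id.mul continuous_const).add
          ((continuous_const.sub continuous_id).mul continuous_const)
      have h0 := hcont.tendsto 0
      simp only [zero_mul, sub_zero, one_mul, zero_add] at h0
      exact h0.mono_left nhdsWithin_le_nhds
    refine le_of_tendsto tend ?_
    filter_upwards [Ioc_mem_nhdsGT zero_lt_one] with θ hθ
    exact (hcomb θ hθ).le
  have hφz : φ z = D * α + (miChan p W₀ + 1) * γ := hrepr D (miChan p W₀ + 1)
  have hφx : φ xpt = D * α + (sInf P - ε) * γ := hrepr D (sInf P - ε)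
  -- γ ≤ 0
  have hγle : γ ≤ 0 := by
    by_contra hγ
    push_neg at hγ
    set M : ℝ := max (miChan p W₀) ((φ xpt - D * α) / γ + 1) with hM
    have hmem : ((D : ℝ), M) ∈ C := ⟨W₀, hW₀, hW₀D.le, le_max_left _ _⟩
    have h1 := hφC _ hmem
    rw [hrepr D M] at h1
    have h2 : (φ xpt - D * α) / γ + 1 ≤ M := le_max_right _ _
    have h3 : ((φ xpt - D * α) / γ + 1) * γ ≤ M * γ :=
      mul_le_mul_of_nonneg_right h2 hγ.le
    have h4 : ((φ xpt - D * α) / γ + 1) * γ = (φ xpt - D * α) + γ := by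
      field_simp
    linarith
  -- α ≤ 0
  have hαle : α ≤ 0 := by
    by_contra hα
    push_neg at hα
    set u : ℝ := max D ((φ xpt - (miChan p W₀ + 1) * γ) / α + 1) with hu
    have hmem : (u, miChan p W₀ + 1) ∈ C :=
      ⟨W₀, hW₀, le_trans hW₀D.le (le_max_left _ _),
        show miChan p W₀ ≤ miChan p W₀ + 1 by linarith⟩
    have h1 := hφC _ hmem
    rw [hrepr u (miChan p W₀ + 1)] at h1
    have h2 : (φ xpt - (miChan p W₀ + 1) * γ) / α + 1 ≤ u := le_max_right _ _
    have h3 : ((φ xpt - (miChan p W₀ + 1) * γ) / α + 1) * α ≤ u * α :=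
      mul_le_mul_of_nonneg_right h2 hα.le
    have h4 : ((φ xpt - (miChan p W₀ + 1) * γ) / α + 1) * α
        = (φ xpt - (miChan p W₀ + 1) * γ) + α := by
      field_simp
    linarith
  -- γ < 0
  have hγne : γ ≠ 0 := by
    intro h
    have hz := hφ z hzint
    rw [hφz, hφx, h] at hz
    simp at hz
  have hγlt : γ < 0 := lt_of_le_of_ne hγle hγne
  set β : ℝ := α / γ with hβdef
  have hβ : 0 ≤ β := div_nonneg_iff.2 (Or.inr ⟨hαle, hγlt.le⟩)
  have keyineq : ∀ W : A → B → ℝ, IsChannel W →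
      sInf P - ε + β * D ≤ miChan p W + β * expDist p W d := by
    intro W hW
    have hmem : (expDist p W d, miChan p W) ∈ C := ⟨W, hW, le_refl _, le_refl _⟩
    have h1 := hφC _ hmem
    rw [hrepr (expDist p W d) (miChan p W), hφx] at h1
    have h2 : 0 ≤ (expDist p W d * α + miChan p W * γ
        - (D * α + (sInf P - ε) * γ)) / γ :=
      div_nonneg_iff.2 (Or.inr ⟨by linarith, hγlt.le⟩)
    have h3 : (expDist p W d * α + miChan p W * γ
        - (D * α + (sInf P - ε) * γ)) / γ
        = expDist p W d * β + miChan p W - (D * β + (sInf P - ε)) := by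
      rw [hβdef]
      field_simp
      try ring
    rw [h3] at h2
    linarith
  have hSlb : sInf P - ε + β * D ≤ sInf {s : ℝ | ∃ W : A → B → ℝ, IsChannel W ∧
      s = miChan p W + β * expDist p W d} := by
    refine le_csInf ⟨miChan p W₀ + β * expDist p W₀ d, W₀, hW₀, rfl⟩ ?_
    rintro s ⟨W, hW, rfl⟩
    exact keyineq W hW
  have hmemQ : sInf {s : ℝ | ∃ W : A → B → ℝ, IsChannel W ∧
      s = miChan p W + β * expDist p W d} - β * D ∈ Q := ⟨β, hβ, rfl⟩
  have hle := le_csSup hQbdd hmemQ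
  linarith
end
end
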